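/- Let w ∈ W_af and μ ∈ Q^∨_+. Then w ≤_{∞/2} w t_μ. -/

import Mathlib

/-!
Common setting for the formalization of results of Naito–Watanabe,
"A combinatorial formula expressing periodic R-polynomials".

We axiomatize the data of a finite (crystallographic) root system `Φ` of a
finite-dimensional complex simple Lie algebra, its finite Weyl group `W`
(acting on the root space and on the coroot lattice `Q∨`), the coroot lattice,
the pairing with the Weyl vector `ρ`, and the real form `h_ℝ = ℝ ⊗ Q∨`.
From these data, all objects of the paper (length, Bruhat order, the affine
Weyl group `W_af = W ⋉ Q∨`, semi-infinite length and semi-infinite Bruhat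
order, label-increasing paths and their degrees, double Bruhat paths, ...)
are *defined*.
-/

noncomputable section
open scoped Classical

/-- The indeterminate `q` of `ℤ[q,q⁻¹]`. -/
noncomputable def qL : LaurentPolynomial ℤ := LaurentPolynomial.T 1

/-- `(-1)^n` for an integer `n` (depending only on the parity of `n`). -/
noncomputable def sgnL (n : ℤ) : LaurentPolynomial ℤ := (-1) ^ n.natAbs

/-- The group structure on `AddAut A` by composition, as in the older Mathlib
(now `AddAut A` carries an additive group structure instead). -/
instance addAutGroupOld {A : Type} [Add A] : Group (AddAut A) where
  mul g h := AddEquiv.trans h g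
  one := AddEquiv.refl A
  inv := AddEquiv.symm
  mul_assoc _ _ _ := rfl
  one_mul _ := rfl
  mul_one _ := rfl
  inv_mul_cancel := AddEquiv.self_trans_symm

@[simp]
theorem addAutOld_mul_apply {A : Type} [Add A] (e₁ e₂ : AddAut A) (a : A) :
    (e₁ * e₂) a = e₁ (e₂ a) := rfl

@[simp]
theorem addAutOld_one_apply {A : Type} [Add A] (a : A) : (1 : AddAut A) a = a := rfl

/-- The data of a finite root system with Weyl group `W`, positive roots `Φ`,
simple roots, highest root `θ`, coroot lattice `Q∨`, Weyl vector pairing `⟨ρ, ·⟩`,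
and the real vector space `h_ℝ`. -/
structure Setting where
  /-- the ambient real vector space spanned by the roots -/
  V : Type
  /-- the finite Weyl group -/
  W : Type
  /-- the coroot lattice `Q∨` -/
  Qv : Type
  /-- the real form `h_ℝ = ℝ ⊗_ℤ Q∨` -/
  hR : Type
  [instV1 : AddCommGroup V]
  [instV2 : Module ℝ V]
  [instV3 : DecidableEq V]
  [instW1 : Group W]
  [instW2 : Fintype W]
  [instW3 : DecidableEq W]
  [instQ1 : AddCommGroup Qv]
  [instQ2 : DecidableEq Qv]
  [instH1 : AddCommGroup hR]
  [instH2 : Module ℝ hR]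
  /-- the set of positive roots `Φ₊` -/
  Φ : Finset V
  /-- the set of simple roots -/
  simple : Finset V
  /-- the highest root `θ` -/
  θ : V
  /-- the action of `W` on the root space -/
  σ : W →* (V ≃ₗ[ℝ] V)
  /-- the action of `W` on the coroot lattice -/
  τ : W →* AddAut Qv
  /-- the action of `W` on `h_ℝ` -/
  σh : W →* (hR ≃ₗ[ℝ] hR)
  /-- the reflection `s_α ∈ W` in a root `α` -/
  refl : V → W
  /-- the coroot `α∨` of a root `α` -/
  coroot : V → Qv
  /-- the pairing `⟨α, μ⟩` of a root with the coroot lattice -/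
  pairR : V → Qv →+ ℤ
  /-- the pairing `⟨ρ, μ⟩` with the Weyl vector -/
  pairρ : Qv →+ ℤ
  /-- the canonical embedding `Q∨ → h_ℝ` -/
  ι : Qv →+ hR
  /-- the pairing `⟨α, μ⟩` of a root with `h_ℝ` -/
  pr : V → hR →ₗ[ℝ] ℝ
  simple_subset : ↑simple ⊆ (↑Φ : Set V)
  theta_mem : θ ∈ Φ
  zero_not_mem : (0 : V) ∉ Φ
  root_stable : ∀ (x : W), ∀ α ∈ Φ, σ x α ∈ Φ ∨ -(σ x α) ∈ Φ
  gen_simple : ∀ x : W, ∃ l : List V, (∀ α ∈ l, α ∈ simple) ∧ x = (l.map refl).prod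
  refl_mul_self : ∀ α ∈ Φ, refl α * refl α = 1
  refl_neg : ∀ α : V, refl (-α) = refl α
  refl_apply_self : ∀ α ∈ Φ, σ (refl α) α = -α
  coroot_neg : ∀ α : V, coroot (-α) = -coroot α
  pairR_neg : ∀ (α : V) (μ : Qv), pairR (-α) μ = -pairR α μ
  pairR_coroot_self : ∀ α ∈ Φ, pairR α (coroot α) = 2
  coroot_equivariant : ∀ (x : W), ∀ α ∈ Φ, coroot (σ x α) = τ x (coroot α)
  pairR_equivariant : ∀ (x : W) (α : V) (μ : Qv), pairR (σ x α) (τ x μ) = pairR α μ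
  tau_refl : ∀ α ∈ Φ, ∀ μ : Qv, τ (refl α) μ = μ - pairR α μ • coroot α
  pairρ_simple : ∀ α ∈ simple, pairρ (coroot α) = 1
  pairρ_pos : ∀ α ∈ Φ, 0 < pairρ (coroot α)
  ι_equivariant : ∀ (x : W) (μ : Qv), σh x (ι μ) = ι (τ x μ)
  pr_equivariant : ∀ (x : W) (α : V) (v : hR), pr (σ x α) (σh x v) = pr α v
  pr_ι : ∀ (α : V) (μ : Qv), pr α (ι μ) = (pairR α μ : ℝ)
  pr_neg : ∀ (α : V) (v : hR), pr (-α) v = -pr α v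

attribute [instance] Setting.instV1 Setting.instV2 Setting.instV3 Setting.instW1
  Setting.instW2 Setting.instW3 Setting.instQ1 Setting.instQ2 Setting.instH1 Setting.instH2

namespace Setting

variable (S : Setting)

/-- The length function of the finite Weyl group `W`
(word length with respect to the simple reflections). -/
def len (x : S.W) : ℕ :=
  sInf {n | ∃ l : List S.V, l.length = n ∧ (∀ α ∈ l, α ∈ S.simple) ∧ x = (l.map S.refl).prod}

/-- One step of the Bruhat order on `W`:
multiplication by a reflection which increases the length. -/
def bstep (u v : S.W) : Prop := (∃ α ∈ S.Φ, v = u * S.refl α) ∧ S.len u < S.len v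

/-- The Bruhat order on the finite Weyl group `W`. -/
def bruhatLe : S.W → S.W → Prop := Relation.ReflTransGen S.bstep

/-- The strict Bruhat order on `W`. -/
def bruhatLt (u v : S.W) : Prop := S.bruhatLe u v ∧ u ≠ v

/-- `ord` is a reflection order on the set `Φ₊` of positive roots:
a (strict) total order such that whenever `α, β, aα + bβ ∈ Φ₊` with
`a, b > 0` and `α ≺ β`, one has `α ≺ aα + bβ ≺ β`. -/
def IsReflOrder (ord : S.V → S.V → Prop) : Prop :=
  (∀ α ∈ S.Φ, ¬ ord α α) ∧
  (∀ α ∈ S.Φ, ∀ β ∈ S.Φ, ∀ γ ∈ S.Φ, ord α β → ord β γ → ord α γ) ∧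
  (∀ α ∈ S.Φ, ∀ β ∈ S.Φ, α ≠ β → (ord α β ∨ ord β α)) ∧
  (∀ α ∈ S.Φ, ∀ β ∈ S.Φ, ∀ γ ∈ S.Φ,
     (∃ a b : ℝ, 0 < a ∧ 0 < b ∧ γ = a • α + b • β) → ord α β → (ord α γ ∧ ord γ β))

/-- The affine Weyl group `W_af = W ⋉ Q∨`; the element `⟨x, λ⟩`
represents `x t_λ`, i.e. `cl(w) = x` and `wt(w) = λ`. -/
@[ext]
structure Aff (S : Setting) where
  /-- the finite part `cl(w) ∈ W` -/
  cl : S.W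
  /-- the translation part `wt(w) ∈ Q∨` -/
  wt : S.Qv

instance {S : Setting} : DecidableEq (Aff S) := fun a b =>
  decidable_of_iff (a.cl = b.cl ∧ a.wt = b.wt) (by cases a; cases b; simp)

instance instGroupAff {S : Setting} : Group (Aff S) where
  mul a b := ⟨a.cl * b.cl, S.τ b.cl⁻¹ a.wt + b.wt⟩
  one := ⟨1, 0⟩
  inv a := ⟨a.cl⁻¹, -(S.τ a.cl a.wt)⟩
  mul_assoc a b c := by
    refine Aff.ext (mul_assoc _ _ _) ?_
    show S.τ c.cl⁻¹ (S.τ b.cl⁻¹ a.wt + b.wt) + c.wt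
        = S.τ (b.cl * c.cl)⁻¹ a.wt + (S.τ c.cl⁻¹ b.wt + c.wt)
    rw [mul_inv_rev, map_mul, map_add, addAutOld_mul_apply, add_assoc]
  one_mul a := by
    refine Aff.ext (one_mul _) ?_
    show S.τ a.cl⁻¹ 0 + a.wt = a.wt
    simp
  mul_one a := by
    refine Aff.ext (mul_one _) ?_
    show S.τ (1 : S.W)⁻¹ a.wt + 0 = a.wt
    simp
  inv_mul_cancel a := by
    refine Aff.ext (inv_mul_cancel _) ?_
    show S.τ a.cl⁻¹ (-(S.τ a.cl a.wt)) + a.wt = 0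
    rw [map_neg, ← addAutOld_mul_apply, ← map_mul, inv_mul_cancel, map_one]
    simp

/-- The translation element `t_λ ∈ W_af`. -/
def t (lam : S.Qv) : Aff S := ⟨1, lam⟩

/-- The canonical embedding `W ↪ W_af`. -/
def emb (x : S.W) : Aff S := ⟨x, 0⟩

/-- Affine roots: the pair `(α, n)` represents `α + nδ`. -/
abbrev AffR := S.V × ℤ

/-- Positive affine real roots:
`Φ^re_{af,+} = {α + mδ : α ∈ Φ₊, m ≥ 0} ∪ {−α + mδ : α ∈ Φ₊, m > 0}`. -/
def IsAffPos (r : S.AffR) : Prop := (r.1 ∈ S.Φ ∧ 0 ≤ r.2) ∨ (-r.1 ∈ S.Φ ∧ 0 < r.2)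

/-- The reflection `s_{α+nδ} = s_α t_{n α∨} ∈ W_af` in an affine real root. -/
def sAff (r : S.AffR) : Aff S := ⟨S.refl r.1, r.2 • S.coroot r.1⟩

/-- The action of `W_af` on affine roots: `x t_λ (α + nδ) = xα + (n − ⟨α, λ⟩)δ`. -/
def actAff (w : Aff S) (r : S.AffR) : S.AffR := (S.σ w.cl r.1, r.2 - S.pairR r.1 w.wt)

/-- `cl₊(α + nδ) = |α| ∈ Φ₊`. -/
def clPlus (r : S.AffR) : S.V := if r.1 ∈ S.Φ then r.1 else -r.1

/-- The semi-infinite length `ℓ^{∞/2}(w) = ℓ(cl(w)) + 2⟨ρ, wt(w)⟩`. -/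
def sil (w : Aff S) : ℤ := S.len w.cl + 2 * S.pairρ w.wt

/-- One step of the semi-infinite Bruhat order: right multiplication by the
reflection in a positive affine real root increasing the semi-infinite length. -/
def silStep (y w : Aff S) : Prop :=
  (∃ r : S.AffR, S.IsAffPos r ∧ w = y * S.sAff r) ∧ S.sil y < S.sil w

/-- The semi-infinite Bruhat order `≤_{∞/2}` on `W_af`. -/
def silLe : Aff S → Aff S → Prop := Relation.ReflTransGen S.silStep

/-- The strict semi-infinite Bruhat order `<_{∞/2}`. -/
def silLt (y w : Aff S) : Prop := S.silLe y w ∧ y ≠ w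

/-- The positive part `Q∨₊ = Σ_i ℤ_{≥0} α_i∨` of the coroot lattice. -/
def Qplus : AddSubmonoid S.Qv := AddSubmonoid.closure (S.coroot '' S.simple)

/-- The simple affine roots: the finite simple roots `α_i`, and `α₀ = −θ + δ`. -/
def SimpleAffR : Set S.AffR := {r | (r.1 ∈ S.simple ∧ r.2 = 0) ∨ r = (-S.θ, 1)}

/-- The simple reflections `S_af` of the affine Weyl group. -/
def Saf : Set (Aff S) := S.sAff '' S.SimpleAffR

end Setting

namespace Setting

variable (S : Setting)

/-- The datum of an edge `y →^m_β w` of a label-increasing path in `W_af`: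
source, target, label `β ∈ Φ₊`, multiplicity `m`, and the kind of the edge
(`isTrans = true` for a translation edge, `false` for a reflection edge). -/
structure PEdge (S : Setting) where
  src : Aff S
  tgt : Aff S
  label : S.V
  m : ℕ
  isTrans : Bool

/-- `e` is an edge `y →^m_β w` in the sense of Definition 2.4.2 of the paper:
either a translation edge `w = y t_{mβ∨}`, `m > 0`, or a reflection edge
`w = cl(y) s_β t_{wt(y)+mβ∨}`, `m ≥ 0`, with `y <_{∞/2} w`. -/
def IsPEdge (e : PEdge S) : Prop :=
  e.label ∈ S.Φ ∧
  (if e.isTrans then 0 < e.m ∧ e.tgt = e.src * S.t (e.m • S.coroot e.label)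
   else e.tgt = ⟨e.src.cl * S.refl e.label, e.src.wt + e.m • S.coroot e.label⟩
        ∧ S.silLt e.src e.tgt)

/-- The weight `d(y →^m_β w)` of an edge. -/
def edgeD (e : PEdge S) : ℤ :=
  if e.isTrans then (S.sil e.tgt - S.sil e.src) / 2 + e.m
  else if S.bruhatLt e.src.cl (e.src.cl * S.refl e.label)
    then (S.sil e.tgt - S.sil e.src + 1) / 2 + e.m
    else (S.sil e.tgt - S.sil e.src - 1) / 2 + e.m

/-- `es` is a label-increasing path from `y` to `w` with respect to the
reflection order `ord` (i.e. an element of `P^≺(y,w)`). -/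
def IsPath (ord : S.V → S.V → Prop) (y w : Aff S) (es : List (PEdge S)) : Prop :=
  (∀ e ∈ es, S.IsPEdge e) ∧
  es.Chain' (fun e f => e.tgt = f.src ∧ ord e.label f.label) ∧
  (∀ e, es.head? = some e → e.src = y) ∧
  (∀ e, es.getLast? = some e → e.tgt = w) ∧
  (es = [] → y = w)

/-- The degree `deg(Δ) = Σ_j d(edge_j) − ℓ(Δ)` of a path. -/
def pathDeg (es : List (PEdge S)) : ℤ := (es.map S.edgeD).sum - es.length

/-- `P^≺_r(y,w)`: label-increasing paths without translation edges. -/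
def IsPathR (ord : S.V → S.V → Prop) (y w : Aff S) (es : List (PEdge S)) : Prop :=
  S.IsPath ord y w es ∧ ∀ e ∈ es, e.isTrans = false

/-- `P^≺_t(y,w)`: label-increasing paths without reflection edges. -/
def IsPathT (ord : S.V → S.V → Prop) (y w : Aff S) (es : List (PEdge S)) : Prop :=
  S.IsPath ord y w es ∧ ∀ e ∈ es, e.isTrans = true

/-- `Σ_{Δ ∈ P^≺(y,w)} q^{deg(Δ)} (q−1)^{ℓ(Δ)}`. -/
def Rpath (ord : S.V → S.V → Prop) (y w : Aff S) : LaurentPolynomial ℤ :=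
  ∑ᶠ Δ : {es : List (PEdge S) // S.IsPath ord y w es},
    LaurentPolynomial.T (S.pathDeg Δ.1) * (qL - 1) ^ Δ.1.length

/-- `r^≺_{y,w}(q) = Σ_{Δ ∈ P^≺_r(y,w)} q^{½(ℓ^{∞/2}(y,w)−ℓ(Δ))} (q−1)^{ℓ(Δ)}`. -/
def rpoly (ord : S.V → S.V → Prop) (y w : Aff S) : LaurentPolynomial ℤ :=
  ∑ᶠ Δ : {es : List (PEdge S) // S.IsPathR ord y w es},
    LaurentPolynomial.T ((S.sil w - S.sil y - Δ.1.length) / 2) * (qL - 1) ^ Δ.1.length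

/-- `t^≺_{y,w}(q) = Σ_{Δ ∈ P^≺_t(y,w)} q^{deg(Δ)} (q−1)^{ℓ(Δ)}`. -/
def tpoly (ord : S.V → S.V → Prop) (y w : Aff S) : LaurentPolynomial ℤ :=
  ∑ᶠ Δ : {es : List (PEdge S) // S.IsPathT ord y w es},
    LaurentPolynomial.T (S.pathDeg Δ.1) * (qL - 1) ^ Δ.1.length

/-- The defining properties (R1)–(R4) of the periodic `R`-polynomials
(Proposition 2.3.5 of the paper, after Lusztig), which uniquely determine
the family `R̂_{y,w}` defined via Lusztig's involution `Ψ`. Here `w0` is the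
longest element of the finite Weyl group `W`. -/
def IsPeriodicR (w0 : S.W) (R : Aff S → Aff S → LaurentPolynomial ℤ) : Prop :=
  (∀ w, R w w = 1) ∧
  (∀ y w, ¬ S.silLe y w → R y w = 0) ∧
  (∀ s ∈ S.Saf, ∀ y w : Aff S,
    (S.silLt (s * w) w → S.silLt (s * y) y → R y w = R (s * y) (s * w)) ∧
    (S.silLt (s * w) w → S.silLt y (s * y) →
       R y w = qL * R (s * y) (s * w) + (qL - 1) * R y (s * w))) ∧
  (∀ (lam : S.Qv) (y : Aff S),
    (∑ x : S.W, sgnL (S.sil (S.emb x * S.t lam) - S.sil y) *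
        LaurentPolynomial.T (S.len (x * w0) : ℤ) * R y (S.emb x * S.t lam))
      = if lam = y.wt then 1 else 0)

/-- An edge datum of the double Bruhat graph: `y' →^d_β w'` with `y', w' ∈ W`. -/
structure DBEdge (S : Setting) where
  src : S.W
  tgt : S.W
  label : S.V
  d : ℤ

/-- `e` is an edge of the double Bruhat graph: `w' = y' s_β` and either
`y' < w'` with `d = ½(ℓ(w')−ℓ(y')+1)` (Bruhat edge), or `y' > w'` with
`d = ½(ℓ(w')−ℓ(y')+2⟨ρ,β∨⟩+1)` (quantum edge). -/
def IsDBEdge (e : DBEdge S) : Prop :=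
  e.label ∈ S.Φ ∧ e.tgt = e.src * S.refl e.label ∧ 0 < e.d ∧
  ((S.bruhatLt e.src e.tgt ∧ 2 * e.d = (S.len e.tgt : ℤ) - S.len e.src + 1) ∨
   (S.bruhatLt e.tgt e.src ∧
      2 * e.d = (S.len e.tgt : ℤ) - S.len e.src + 2 * S.pairρ (S.coroot e.label) + 1))

/-- `es` is a label-increasing double Bruhat path from `y` to `w` (an element of
`DBP^⪯(y,w)`): a path in the double Bruhat graph from `cl(y)` to `cl(w)` with
weakly increasing labels, such that the sum of the coroots of the labels of
the quantum edges equals `wt(w) − wt(y)`. -/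
def IsDBP (ord : S.V → S.V → Prop) (y w : Aff S) (es : List (DBEdge S)) : Prop :=
  (∀ e ∈ es, S.IsDBEdge e) ∧
  es.Chain' (fun e f => e.tgt = f.src ∧ (e.label = f.label ∨ ord e.label f.label)) ∧
  (∀ e, es.head? = some e → e.src = y.cl) ∧
  (∀ e, es.getLast? = some e → e.tgt = w.cl) ∧
  (es = [] → y.cl = w.cl) ∧
  (es.map (fun e => if S.bruhatLt e.tgt e.src then S.coroot e.label else 0)).sum
    = w.wt - y.wt

/-- `ℓ'(Δ)`: the number of distinct labels of a double Bruhat path. -/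
def numLabels (es : List (DBEdge S)) : ℕ := (es.map (fun e => e.label)).dedup.length

/-- `deg(Δ) = Σ_i d_i − ℓ'(Δ)` for a double Bruhat path. -/
def dbpDeg (es : List (DBEdge S)) : ℤ := (es.map (fun e => e.d)).sum - S.numLabels es

/-- `Σ_{Δ ∈ DBP^⪯(y,w)} q^{deg(Δ)} (q−1)^{ℓ'(Δ)}`. -/
def dbpSum (ord : S.V → S.V → Prop) (y w : Aff S) : LaurentPolynomial ℤ :=
  ∑ᶠ Δ : {es : List (DBEdge S) // S.IsDBP ord y w es},
    LaurentPolynomial.T (S.dbpDeg Δ.1) * (qL - 1) ^ S.numLabels Δ.1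

end Setting
namespace Setting

variable (S : Setting)

/-! ### Alcoves and the alcove-walk definition of the semi-infinite length -/

/-- The fundamental (anti-dominant) alcove
`A⁻ = {μ ∈ h_ℝ : −1 < ⟨α, μ⟩ < 0 for all α ∈ Φ₊}`. -/
def Aneg : Set S.hR := {v | ∀ α ∈ S.Φ, -1 < S.pr α v ∧ S.pr α v < 0}

/-- The alcove `A⁻ · w = cl(w)⁻¹ A⁻ + wt(w)` associated to `w ∈ W_af`. -/
def alc (w : Aff S) : Set S.hR := (fun v => S.σh w.cl⁻¹ v + S.ι w.wt) '' S.Aneg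

/-- The affine reflection of `h_ℝ` in the hyperplane `F_{α,m} = {μ : ⟨α,μ⟩ = m}`. -/
def reflH (α : S.V) (m : ℤ) (v : S.hR) : S.hR := v - (S.pr α v - m) • S.ι (S.coroot α)

/-- The positive half-space `F⁺_{α,m} = {μ : ⟨α,μ⟩ > m}`. -/
def Fpos (α : S.V) (m : ℤ) : Set S.hR := {v | (m : ℝ) < S.pr α v}

/-- Two alcoves share a unique common wall lying on the hyperplane `F_{α,m}`;
equivalently, they are distinct and mirror images of each other in `F_{α,m}`. -/
def Crossing (A B : Set S.hR) (α : S.V) (m : ℤ) : Prop :=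
  α ∈ S.Φ ∧ B = S.reflH α m '' A ∧ A ≠ B

/-- Two alcoves share a unique common wall. -/
def CrossSome (A B : Set S.hR) : Prop := ∃ (α : S.V) (m : ℤ), S.Crossing A B α m

/-- The dominant Weyl chamber `C⁺ = {μ ∈ h_ℝ : ⟨α_i, μ⟩ > 0 for all simple α_i}`. -/
def Cplus : Set S.hR := {v | ∀ α ∈ S.simple, 0 < S.pr α v}

/-! ### The ordinary Bruhat order on the affine Weyl group -/

/-- The length function of the Coxeter system `(W_af, S_af)`
(word length with respect to the simple reflections `S_af`). -/
def lenAf (w : Aff S) : ℕ :=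
  sInf {n | ∃ l : List (Aff S), l.length = n ∧ (∀ s ∈ l, s ∈ S.Saf) ∧ l.prod = w}

/-- The reflections of the Coxeter system `(W_af, S_af)`. -/
def ReflAf : Set (Aff S) := {r | ∃ (w s : Aff S), s ∈ S.Saf ∧ r = w * s * w⁻¹}

/-- One step of the ordinary Bruhat order on `W_af`. -/
def bstepAf (u v : Aff S) : Prop := (∃ r ∈ S.ReflAf, v = u * r) ∧ S.lenAf u < S.lenAf v

/-- The ordinary Bruhat order on `W_af` (as a Coxeter group). -/
def bruhatLeAf : Aff S → Aff S → Prop := Relation.ReflTransGen S.bstepAf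

/-! ### Vertices, descents, and the maps `Ψ_L`, `Ψ_R` -/

/-- The `i`-th vertex `u_i` of a path starting at `y` (the target of the `i`-th
edge, or `y` for `i = 0`). -/
def vtx (y : Aff S) (es : List (PEdge S)) (i : ℕ) : Aff S :=
  ((es.take i).getLast?).elim y (fun e => e.tgt)

/-- `d_Δ`, the minimum of the `s`-descent set
`D_s(Δ) = {i : s u_i = u_{i−1}}` (1-indexed), `= k + 1` if it is empty. -/
def dMin (s : Aff S) (es : List (PEdge S)) : ℕ :=
  es.findIdx (fun e => decide (s * e.tgt = e.src)) + 1

/-- `d^Δ`, the maximum of the `s`-descent set, `= 0` if it is empty. -/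
def dMax (s : Aff S) (es : List (PEdge S)) : ℕ :=
  es.length - es.reverse.findIdx (fun e => decide (s * e.tgt = e.src))

/-- `Δ` has nonempty `s`-descent set, i.e. `Δ ∈ P^≺_+`. -/
def HasDescent (s : Aff S) (es : List (PEdge S)) : Prop := ∃ e ∈ es, s * e.tgt = e.src

/-- `P^≺_+(y,w)`: reflection-edge paths with nonempty `s`-descent set. -/
def IsPathPlus (ord : S.V → S.V → Prop) (s : Aff S) (y w : Aff S)
    (es : List (PEdge S)) : Prop :=
  S.IsPathR ord y w es ∧ S.HasDescent s es

/-- Translating both endpoints of an edge by `s` on the left. -/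
def sEdge (s : Aff S) (e : PEdge S) : PEdge S :=
  ⟨s * e.src, s * e.tgt, e.label, e.m, e.isTrans⟩

/-- The map `Ψ_L : P^≺_+(u,v) → P^≺_r(su, v)`: delete the edge at position `d_Δ`
and translate the initial segment by `s`. -/
def psiL (s : Aff S) (es : List (PEdge S)) : List (PEdge S) :=
  ((es.take (S.dMin s es - 1)).map (S.sEdge s)) ++ es.drop (S.dMin s es)

/-- The map `Ψ_R : P^≺_+(u,v) → P^≺_r(u, sv)`: delete the edge at position `d^Δ`
and translate the final segment by `s`. -/
def psiR (s : Aff S) (es : List (PEdge S)) : List (PEdge S) :=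
  es.take (S.dMax s es - 1) ++ ((es.drop (S.dMax s es)).map (S.sEdge s))

/-! ### Betweenness and the finite R-polynomials -/

/-- `γ` is between `γ'` and `γ''` in the reflection order `ord`. -/
def between (ord : S.V → S.V → Prop) (γ γ' γ'' : S.V) : Prop :=
  (ord γ' γ ∧ ord γ γ'') ∨ (ord γ'' γ ∧ ord γ γ')

/-- The defining recursion (Proposition 2.3.2) of the ordinary `R`-polynomials of
the finite Coxeter system `(W, S)`, which uniquely determines the family
`R_{u,v}` defined by `T̄_v = q^{−ℓ(v)} Σ_u (−1)^{ℓ(u,v)} R_{u,v}(q) T_u`. -/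
def IsFiniteR (R : S.W → S.W → LaurentPolynomial ℤ) : Prop :=
  (∀ v, R v v = 1) ∧
  (∀ u v, ¬ S.bruhatLe u v → R u v = 0) ∧
  (∀ α ∈ S.simple, ∀ u v : S.W,
    (S.bruhatLt (S.refl α * v) v → S.bruhatLt (S.refl α * u) u →
       R u v = R (S.refl α * u) (S.refl α * v)) ∧
    (S.bruhatLt (S.refl α * v) v → S.bruhatLt u (S.refl α * u) →
       R u v = qL * R (S.refl α * u) (S.refl α * v) + (qL - 1) * R u (S.refl α * v)))

/-- Exactly one of three propositions holds. -/
def X1of3 (p q r : Prop) : Prop := (p ∧ ¬q ∧ ¬r) ∨ (¬p ∧ q ∧ ¬r) ∨ (¬p ∧ ¬q ∧ r)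

/-- Exactly one of two propositions holds. -/
def X1of2 (p q : Prop) : Prop := (p ∧ ¬q) ∨ (¬p ∧ q)

end Setting


/-!
Since `t_{μ+ν} = t_μ t_ν`, it suffices to treat `μ = α∨` with `α` simple. For every `n`,
`t_{α∨} = s_{α+nδ} s_{α+(n+1)δ}`, and `ℓ^{∞/2}(w t_{α∨}) = ℓ^{∞/2}(w) + 2`. The determinant of
the action of `W` on the span of the coroots is a sign character taking every reflection to `-1`,
so `ℓ(cl(w) s_α) - ℓ(cl(w))` is odd; this lets one choose `n` with
`ℓ^{∞/2}(w s_{α+nδ}) = ℓ^{∞/2}(w) + 1`, and `w → w s_{α+nδ} → w t_{α∨}` is a chain of two steps.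
-/

lemma Module.det_preReflection {R M : Type*} [CommRing R] [AddCommGroup M] [Module R M]
    [Module.Free R M] [Module.Finite R M] (x : M) (f : Module.Dual R M) :
    (Module.preReflection x f).det = 1 - f x := by
  have : Module.preReflection x f = LinearMap.transvection (-f) x := by
    ext y
    simp [Module.preReflection_apply, LinearMap.transvection.apply, sub_eq_add_neg]
  rw [this, LinearMap.transvection.det, LinearMap.neg_apply, sub_eq_add_neg]

namespace Setting

variable (S : Setting)

lemma refl_inv {α : S.V} (hα : α ∈ S.Φ) : (S.refl α)⁻¹ = S.refl α :=
  inv_eq_of_mul_eq_one_right (S.refl_mul_self α hα)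

def corootSpan : Submodule ℝ S.hR :=
  Submodule.span ℝ ((fun δ => S.ι (S.coroot δ)) '' (S.Φ : Set S.V))

instance : FiniteDimensional ℝ S.corootSpan :=
  FiniteDimensional.span_of_finite ℝ (S.Φ.finite_toSet.image _)

lemma ι_coroot_mem_corootSpan {δ : S.V} (hδ : δ ∈ S.Φ) : S.ι (S.coroot δ) ∈ S.corootSpan :=
  Submodule.subset_span ⟨δ, hδ, rfl⟩

lemma σh_mem_corootSpan (x : S.W) {v : S.hR} (hv : v ∈ S.corootSpan) :
    S.σh x v ∈ S.corootSpan := by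
  induction hv using Submodule.span_induction with
  | mem u hu =>
    obtain ⟨δ, hδ, rfl⟩ := hu
    rw [S.ι_equivariant, ← S.coroot_equivariant x δ hδ]
    rcases S.root_stable x δ hδ with h | h
    · exact S.ι_coroot_mem_corootSpan h
    · rw [← neg_neg (S.σ x δ), S.coroot_neg, map_neg]
      exact neg_mem (S.ι_coroot_mem_corootSpan h)
  | zero => simp
  | add u v _ _ hu hv => rw [map_add]; exact add_mem hu hv
  | smul c u _ hu => rw [map_smul]; exact Submodule.smul_mem _ _ hu

def corootSpanRep : S.W →* Module.End ℝ S.corootSpan where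
  toFun x := (S.σh x).toLinearMap.restrict fun _ => S.σh_mem_corootSpan x
  map_one' := by ext; simp
  map_mul' x y := by ext; simp

-- `h_ℝ` need not be finite-dimensional (where `LinearMap.det` is the junk value `1`),
-- hence the restriction to the span of the coroots.
def sign : S.W →* ℝ := LinearMap.det.comp S.corootSpanRep

lemma corootSpanRep_refl {α : S.V} (hα : α ∈ S.Φ) :
    S.corootSpanRep (S.refl α) = Module.preReflection
      ⟨S.ι (S.coroot α), S.ι_coroot_mem_corootSpan hα⟩ ((S.pr α).comp S.corootSpan.subtype) := by
  have hgen : Set.EqOn (S.σh (S.refl α)).toLinearMap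
      (Module.preReflection (S.ι (S.coroot α)) (S.pr α))
      ((fun δ => S.ι (S.coroot δ)) '' (S.Φ : Set S.V)) := by
    rintro _ ⟨δ, -, rfl⟩
    simp [Module.preReflection_apply, S.ι_equivariant, S.tau_refl α hα, S.pr_ι,
      ← Int.cast_smul_eq_zsmul ℝ]
  ext v
  exact LinearMap.eqOn_span hgen v.2

lemma sign_refl {α : S.V} (hα : α ∈ S.Φ) : S.sign (S.refl α) = -1 := by
  rw [sign, MonoidHom.comp_apply, S.corootSpanRep_refl hα, Module.det_preReflection,
    LinearMap.comp_apply, Submodule.subtype_apply, S.pr_ι, S.pairR_coroot_self α hα]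
  norm_num

lemma exists_reduced_word (x : S.W) : ∃ l : List S.V, l.length = S.len x ∧
    (∀ α ∈ l, α ∈ S.simple) ∧ x = (l.map S.refl).prod := by
  obtain ⟨l, hl, hx⟩ := S.gen_simple x
  exact Nat.sInf_mem (s := {n | ∃ l : List S.V, l.length = n ∧ (∀ α ∈ l, α ∈ S.simple) ∧
    x = (l.map S.refl).prod}) ⟨l.length, l, rfl, hl, hx⟩

lemma sign_prod_refl (l : List S.V) (hl : ∀ α ∈ l, α ∈ S.Φ) :
    S.sign (l.map S.refl).prod = (-1) ^ l.length := by
  induction l with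
  | nil => simp
  | cons β l ih =>
    rw [List.map_cons, List.prod_cons, map_mul, S.sign_refl (hl β List.mem_cons_self),
      ih fun α hα => hl α (List.mem_cons_of_mem _ hα), List.length_cons, pow_succ']

lemma sign_eq_neg_one_pow_len (x : S.W) : S.sign x = (-1) ^ S.len x := by
  obtain ⟨l, hlen, hl, rfl⟩ := S.exists_reduced_word x
  rw [← hlen, S.sign_prod_refl l fun α hα => S.simple_subset (hl α hα)]

lemma odd_len_mul_refl_add_len (x : S.W) {α : S.V} (hα : α ∈ S.Φ) :
    Odd (S.len (x * S.refl α) + S.len x) := by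
  have h := S.sign.map_mul x (S.refl α)
  rw [S.sign_refl hα, S.sign_eq_neg_one_pow_len,
    S.sign_eq_neg_one_pow_len] at h
  rw [← neg_one_pow_eq_neg_one_iff_odd (R := ℝ) (by norm_num), pow_add, h]
  rw [mul_neg_one, neg_mul, ← pow_add, ← two_mul, pow_mul, neg_one_sq, one_pow]

@[simp] lemma Aff.mul_cl (a b : Aff S) : (a * b).cl = a.cl * b.cl := rfl

@[simp] lemma Aff.mul_wt (a b : Aff S) : (a * b).wt = S.τ b.cl⁻¹ a.wt + b.wt := rfl

lemma t_add (μ ν : S.Qv) : S.t (μ + ν) = S.t μ * S.t ν := by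
  ext <;> simp [t]

lemma t_zero : S.t 0 = 1 := rfl

lemma sil_mul_t (w : Aff S) (μ : S.Qv) : S.sil (w * S.t μ) = S.sil w + 2 * S.pairρ μ := by
  simp only [sil, Aff.mul_cl, Aff.mul_wt, t, mul_one, inv_one, map_one, addAutOld_one_apply,
    map_add]
  ring

lemma sil_mul_sAff (w : Aff S) {α : S.V} (hα : α ∈ S.Φ) (n : ℤ) :
    S.sil (w * S.sAff (α, n)) = S.len (w.cl * S.refl α) + 2 * S.pairρ w.wt
      + 2 * (n - S.pairR α w.wt) * S.pairρ (S.coroot α) := by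
  simp only [sil, Aff.mul_cl, Aff.mul_wt, sAff, S.refl_inv hα, S.tau_refl α hα, map_add,
    map_sub, map_zsmul, smul_eq_mul]
  ring

lemma sAff_mul_sAff_add_one {α : S.V} (hα : α ∈ S.Φ) (n : ℤ) :
    S.sAff (α, n) * S.sAff (α, n + 1) = S.t (S.coroot α) := by
  ext
  · exact S.refl_mul_self α hα
  · simp only [Aff.mul_wt, sAff, t, S.refl_inv hα, map_zsmul, S.tau_refl α hα,
      S.pairR_coroot_self α hα]
    module

lemma silStep_mul_sAff (w : Aff S) {α : S.V} (hα : α ∈ S.Φ) (n : ℤ)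
    (h : S.sil w < S.sil (w * S.sAff (α, n))) : S.silStep w (w * S.sAff (α, n)) := by
  refine ⟨?_, h⟩
  rcases le_or_gt 0 n with hn | hn
  · exact ⟨(α, n), Or.inl ⟨hα, hn⟩, rfl⟩
  · refine ⟨(-α, -n), Or.inr ⟨by rwa [neg_neg], by omega⟩, ?_⟩
    simp only [sAff, S.refl_neg, S.coroot_neg, smul_neg, neg_smul, neg_neg]

lemma silLe_mul_t_coroot (w : Aff S) {α : S.V} (hα : α ∈ S.simple) :
    S.silLe w (w * S.t (S.coroot α)) := by
  have hαΦ := S.simple_subset hα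
  have hρ := S.pairρ_simple α hα
  obtain ⟨m, hm⟩ := S.odd_len_mul_refl_add_len w.cl hαΦ
  set n : ℤ := S.pairR α w.wt + S.len w.cl - m
  have hsil_u : S.sil (w * S.sAff (α, n)) = S.sil w + 1 := by
    rw [S.sil_mul_sAff w hαΦ, hρ, sil]
    omega
  have hsil_t : S.sil (w * S.t (S.coroot α)) = S.sil w + 2 := by
    rw [S.sil_mul_t, hρ, mul_one]
  have hfactor : w * S.t (S.coroot α) = w * S.sAff (α, n) * S.sAff (α, n + 1) := by
    rw [mul_assoc, S.sAff_mul_sAff_add_one hαΦ]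
  refine .head (S.silStep_mul_sAff w hαΦ n (by omega)) (.single ?_)
  rw [hfactor]
  exact S.silStep_mul_sAff _ hαΦ (n + 1) (by rw [← hfactor]; omega)

end Setting

/-- **Lemma 2.2.4.**
Let `w ∈ W_af` and `μ ∈ Q∨₊`.  Then `w ≤_{∞/2} w t_μ`. -/
theorem silLe_mul_translation (S : Setting) (w : Setting.Aff S) (mu : S.Qv)
    (hmu : mu ∈ S.Qplus) :
    S.silLe w (w * S.t mu) := by
  induction hmu using AddSubmonoid.closure_induction generalizing w with
  | mem μ hμ =>
    obtain ⟨α, hα, rfl⟩ := hμ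
    exact S.silLe_mul_t_coroot w hα
  | zero => rw [S.t_zero, mul_one]; exact .refl
  | add μ ν _ _ ihμ ihν =>
    rw [S.t_add, ← mul_assoc]
    exact (ihμ w).trans (ihν _)
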